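/- arXiv:1112.3837 — 2 statements merged into one kernel-verified Lean document; each statement's English description precedes it below -/
import Mathlib

section
/- The functor ∇ : Set → HAsm is full and faithful, preserves all finite limits and all finite colimits, and preserves exponentials: for any sets X and Y, the assembly ∇(Y^X) (where Y^X is the set of all functions from X to Y) is an exponential of ∇Y by ∇X in the category HAsm. -/
open CategoryTheory Encodable Denumerable

namespace Herbrand

/-- Kleene application in Kleene's first pca `K₁`: `e · n`. -/
def kap (e n : ℕ) : Part ℕ := Nat.Partrec.Code.eval (ofNat Nat.Partrec.Code e) n

/-- `kapIn r n S` : `r · n` is defined and its value lies in `S`. -/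
def kapIn (r n : ℕ) (S : Set ℕ) : Prop := ∃ v ∈ kap r n, v ∈ S

/-- The list coded by a natural number (canonical bijection `ℕ ≃ List ℕ`). -/
def toL (n : ℕ) : List ℕ := ofNat (List ℕ) n

/-- The code of a list of natural numbers. -/
def ofL (l : List ℕ) : ℕ := encode l

@[simp] lemma toL_ofL (l : List ℕ) : toL (ofL l) = l := ofNat_encode l

/-- `!A` : the set of codes of lists all of whose entries lie in `A`. -/
def bang (A : Set ℕ) : Set ℕ := {n | ∀ x ∈ toL n, x ∈ A}

/-- `m ⪯ n` : every entry of the list coded by `m` is an entry of the list coded by `n`. -/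
def sle (m n : ℕ) : Prop := ∀ x ∈ toL m, x ∈ toL n

lemma sle_refl (m : ℕ) : sle m m := fun _ hx => hx

lemma sle_trans {m n k : ℕ} (h1 : sle m n) (h2 : sle n k) : sle m k :=
  fun x hx => h2 x (h1 x hx)

/-- `S` is upward closed in `!A`. -/
def UpwardClosedIn (A S : Set ℕ) : Prop :=
  ∀ m ∈ S, ∀ n ∈ bang A, sle m n → n ∈ S

/-- `↑_{!A} S` : the set of `n ∈ !A` with `m ⪯ n` for some `m ∈ S`. -/
def upClo (A S : Set ℕ) : Set ℕ := {n | n ∈ bang A ∧ ∃ m ∈ S, sle m n}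

lemma mem_bang_univ (n : ℕ) : n ∈ bang Set.univ := fun x _ => Set.mem_univ x

/-- From a partial recursive function we get a `K₁`-code for it. -/
theorem exists_kap_eq {f : ℕ →. ℕ} (hf : Nat.Partrec f) : ∃ e, ∀ n, kap e n = f n := by
  obtain ⟨c, hc⟩ := Nat.Partrec.Code.exists_code.mp hf
  exact ⟨encode c, fun n => by simp [kap, hc]⟩


/-- A Herbrand assembly over `K₁`. -/
structure HAsmObj where
  carrier : Type
  real : Set ℕ
  rz : carrier → Set ℕ
  rz_sub : ∀ a, rz a ⊆ bang real
  rz_ne : ∀ a, (rz a).Nonempty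
  rz_up : ∀ a, UpwardClosedIn real (rz a)

/-- `r ∈ ℕ` tracks the function `f` between the underlying sets of two Herbrand assemblies. -/
def Tracks (B A : HAsmObj) (f : B.carrier → A.carrier) (r : ℕ) : Prop :=
  (∀ m ∈ bang B.real, kapIn r m (bang A.real)) ∧
  ∀ b : B.carrier, ∀ m ∈ B.rz b, kapIn r m (A.rz (f b))

/-- A morphism of Herbrand assemblies: a tracked function. -/
structure HHom (B A : HAsmObj) where
  toFun : B.carrier → A.carrier
  tracked : ∃ r, Tracks B A toFun r

theorem HHom.ext' {B A : HAsmObj} {f g : HHom B A} (h : f.toFun = g.toFun) : f = g := by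
  cases f; cases g; simpa using h

theorem tracks_id_fun (B A : HAsmObj) (f : B.carrier → A.carrier)
    (h1 : ∀ m ∈ bang B.real, m ∈ bang A.real)
    (h2 : ∀ b : B.carrier, ∀ m ∈ B.rz b, m ∈ A.rz (f b)) : ∃ r, Tracks B A f r := by
  obtain ⟨e, he⟩ := exists_kap_eq (Nat.Partrec.of_primrec Nat.Primrec.id)
  exact ⟨e, fun m hm => ⟨m, by simp [he], h1 m hm⟩,
    fun b m hm => ⟨m, by simp [he], h2 b m hm⟩⟩

theorem tracked_id (A : HAsmObj) : ∃ r, Tracks A A id r :=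
  tracks_id_fun A A id (fun _ h => h) (fun _ _ h => h)

theorem tracked_comp {C B A : HAsmObj} {f : C.carrier → B.carrier} {g : B.carrier → A.carrier}
    (hf : ∃ r, Tracks C B f r) (hg : ∃ s, Tracks B A g s) : ∃ t, Tracks C A (g ∘ f) t := by
  obtain ⟨r, hr1, hr2⟩ := hf
  obtain ⟨s, hs1, hs2⟩ := hg
  refine ⟨encode (Nat.Partrec.Code.comp (ofNat Nat.Partrec.Code s) (ofNat Nat.Partrec.Code r)),
    ?_, ?_⟩
  · intro m hm
    obtain ⟨v, hv, hv'⟩ := hr1 m hm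
    obtain ⟨w, hw, hw'⟩ := hs1 v hv'
    exact ⟨w, by simp [kap, Nat.Partrec.Code.eval]; exact Part.mem_bind_iff.mpr ⟨v, hv, hw⟩, hw'⟩
  · intro c m hm
    obtain ⟨v, hv, hv'⟩ := hr2 c m hm
    obtain ⟨w, hw, hw'⟩ := hs2 (f c) v hv'
    exact ⟨w, by simp [kap, Nat.Partrec.Code.eval]; exact Part.mem_bind_iff.mpr ⟨v, hv, hw⟩, hw'⟩

/-- The category `HAsm` of Herbrand assemblies over `K₁`. -/
instance : Category HAsmObj where
  Hom B A := HHom B A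
  id A := ⟨id, tracked_id A⟩
  comp f g := ⟨g.toFun ∘ f.toFun, tracked_comp f.tracked g.tracked⟩
  id_comp f := HHom.ext' rfl
  comp_id f := HHom.ext' rfl
  assoc f g h := HHom.ext' rfl


/-- The Herbrand assembly `∇X = (X, ℕ, x ↦ !ℕ)`. -/
def nablaObj (X : Type) : HAsmObj where
  carrier := X
  real := Set.univ
  rz _ := bang Set.univ
  rz_sub _ := fun _ h => h
  rz_ne _ := ⟨0, mem_bang_univ 0⟩
  rz_up _ := fun _ _ n hn _ => hn

/-- The functor `∇ : Set → HAsm`. -/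
def Nabla : Type ⥤ HAsmObj where
  obj := nablaObj
  map f := ⟨f, tracks_id_fun _ _ f (fun _ h => h) (fun _ _ h => h)⟩
  map_id _ := HHom.ext' rfl
  map_comp _ _ := HHom.ext' rfl

/-- The underlying-set functor `Γ : HAsm → Set`. -/
def Gamma : HAsmObj ⥤ Type where
  obj A := A.carrier
  map f := TypeCat.ofHom f.toFun

/-- The realizability structure of the natural numbers object: `ν n = ↑_{!ℕ} {⟨n⟩}`. -/
def nuN (n : ℕ) : Set ℕ := upClo Set.univ {ofL [n]}

/-- The natural numbers object `N = (ℕ, ℕ, ν)` of `HAsm`. -/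
def NObj : HAsmObj where
  carrier := ℕ
  real := Set.univ
  rz := nuN
  rz_sub _ := fun _ hm => hm.1
  rz_ne n := ⟨ofL [n], mem_bang_univ _, ofL [n], rfl, sle_refl _⟩
  rz_up _ := fun m hm k hk hmk => ⟨hk, hm.2.choose, hm.2.choose_spec.1,
    sle_trans hm.2.choose_spec.2 hmk⟩

/-- The terminal object `1 = ({*}, ℕ, * ↦ !ℕ)` of `HAsm`. -/
def oneObj : HAsmObj := nablaObj PUnit

/-- The zero morphism `0 : 1 ⟶ N`. -/
def zeroH : oneObj ⟶ NObj := by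
  refine ⟨fun _ => (0 : ℕ), ?_⟩
  obtain ⟨e, he⟩ := exists_kap_eq (Nat.Partrec.of_primrec (Nat.Primrec.const (ofL [0])))
  exact ⟨e, fun m _ => ⟨ofL [0], by simp [he], mem_bang_univ _⟩,
    fun b m _ => ⟨ofL [0], by simp [he], mem_bang_univ _, ofL [0], rfl, sle_refl _⟩⟩

/-- The successor morphism `s : N ⟶ N`. -/
def succH : NObj ⟶ NObj := by
  refine ⟨(Nat.succ : ℕ → ℕ), ?_⟩
  have hp : Primrec (fun m : ℕ => ofL ((toL m).map Nat.succ)) :=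
    Primrec.encode.comp ((Primrec.ofNat (List ℕ)).list_map
      ((Primrec.succ.comp Primrec.snd).to₂))
  obtain ⟨e, he⟩ := exists_kap_eq (Nat.Partrec.of_primrec (Primrec.nat_iff.mp hp))
  refine ⟨e, fun m _ => ⟨ofL ((toL m).map Nat.succ), by simp [he], mem_bang_univ _⟩, ?_⟩
  rintro (n : ℕ) m hm
  refine ⟨ofL ((toL m).map Nat.succ), by simp [he], mem_bang_univ _, ofL [n + 1], rfl, ?_⟩
  intro x hx
  have hn : n ∈ toL m := hm.2.choose_spec.2 n (by
    have : hm.2.choose = ofL [n] := hm.2.choose_spec.1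
    rw [this]; simp)
  have hx' : x = n + 1 := by simpa using hx
  subst hx'
  simp only [toL_ofL, List.mem_map]
  exact ⟨n, hn, rfl⟩


/-!
Maps into `∇Y` carry no realizability constraint, since the identity code tracks every function
`A → Y`; so morphisms `A ⟶ ∇Y` are just functions `Γ A → Y`. Hence `Γ ⊣ ∇`, so `∇` preserves
limits, and `∇` is fully faithful since `Γ ∇ = id`. A code tracking a map out of `∇X` must send
the empty list to one realizer that works for every `x`; for a finite colimit the realizers of
the finitely many legs are concatenated into a single one, which works by upward closure. For
exponentials, global points identify the carrier of a product `Z × ∇X` with `Z.carrier × X`, and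
currying does the rest.
-/

open CategoryTheory.Limits

def toNabla {A : HAsmObj} {Y : Type} (f : A.carrier → Y) : A ⟶ Nabla.obj Y :=
  ⟨f, tracks_id_fun A (nablaObj Y) f (fun m _ => mem_bang_univ m) (fun _ m _ => mem_bang_univ m)⟩

def homNablaEquiv (A : HAsmObj) (Y : Type) : (A ⟶ Nabla.obj Y) ≃ (A.carrier → Y) where
  toFun f := f.toFun
  invFun := toNabla
  left_inv _ := rfl
  right_inv _ := rfl

def gammaNablaAdjunction : Gamma ⊣ Nabla :=
  Adjunction.mkOfHomEquiv
    { homEquiv A Y := TypeCat.homEquiv.trans (homNablaEquiv A Y).symm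
      homEquiv_naturality_left_symm _ _ := rfl
      homEquiv_naturality_right _ _ := rfl }

def nablaFullyFaithful : Nabla.FullyFaithful where
  preimage f := TypeCat.ofHom f.toFun

lemma exists_tracks_nablaObj_iff {X : Type} {Z : HAsmObj} (f : X → Z.carrier) :
    (∃ r, Tracks (nablaObj X) Z f r) ↔ ∃ v ∈ bang Z.real, ∀ x, v ∈ Z.rz (f x) := by
  constructor
  · rintro ⟨r, h_bang, h_rz⟩
    obtain ⟨v, hv, hv_bang⟩ := h_bang (ofL []) (mem_bang_univ _)
    refine ⟨v, hv_bang, fun x => ?_⟩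
    obtain ⟨w, hw, hw_rz⟩ := h_rz x (ofL []) (mem_bang_univ _)
    rwa [Part.mem_unique hv hw]
  · rintro ⟨v, hv_bang, hv_rz⟩
    obtain ⟨e, he⟩ := exists_kap_eq (Nat.Partrec.of_primrec (Nat.Primrec.const v))
    exact ⟨e, fun m _ => ⟨v, by simp [he], hv_bang⟩, fun x m _ => ⟨v, by simp [he], hv_rz x⟩⟩

lemma exists_bang_upper_bound {ι : Type} [Finite ι] {A : Set ℕ} {v : ι → ℕ}
    (hv : ∀ i, v i ∈ bang A) : ∃ w ∈ bang A, ∀ i, sle (v i) w := by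
  have := Fintype.ofFinite ι
  refine ⟨ofL ((Finset.univ : Finset ι).toList.flatMap (toL ∘ v)), ?_, fun i x hx => ?_⟩
  · intro x hx
    obtain ⟨i, -, hxi⟩ := List.mem_flatMap.mp (by simpa only [toL_ofL] using hx)
    exact hv i x hxi
  · rw [toL_ofL]
    exact List.mem_flatMap.mpr ⟨i, by simp, hx⟩

lemma exists_tracks_nablaObj_of_cover {ι : Type} [Finite ι] {W : ι → Type} {X : Type}
    {Z : HAsmObj} (g : ∀ i, W i → X) (hg : ∀ x, ∃ i w, g i w = x) (f : X → Z.carrier)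
    (φ : ∀ i, Nabla.obj (W i) ⟶ Z) (hφ : ∀ i w, f (g i w) = (φ i).toFun w) :
    ∃ r, Tracks (nablaObj X) Z f r := by
  choose v hv_bang hv_rz using fun i => (exists_tracks_nablaObj_iff _).mp (φ i).tracked
  obtain ⟨w, hw_bang, hvw⟩ := exists_bang_upper_bound hv_bang
  refine (exists_tracks_nablaObj_iff f).mpr ⟨w, hw_bang, fun x => ?_⟩
  obtain ⟨i, y, rfl⟩ := hg x
  exact hφ i y ▸ Z.rz_up _ (v i) (hv_rz i y) w hw_bang (hvw i)

def underlyingCocone {J : Type} [SmallCategory J] {K : J ⥤ Type} (s : Cocone (K ⋙ Nabla)) :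
    Cocone K where
  pt := s.pt.carrier
  ι.app j := TypeCat.ofHom (s.ι.app j).toFun
  ι.naturality _ _ g :=
    ConcreteCategory.hom_ext _ _ (congrFun (congrArg HHom.toFun (s.ι.naturality g)))

noncomputable def nablaIsColimit {J : Type} [SmallCategory J] [FinCategory J] {K : J ⥤ Type}
    {c : Cocone K} (hc : IsColimit c) : IsColimit (Nabla.mapCocone c) where
  desc s := ⟨hc.desc (underlyingCocone s), exists_tracks_nablaObj_of_cover (fun j => c.ι.app j)
    (Types.jointly_surjective K hc) _ s.ι.app
    (fun j => types_congr_hom (hc.fac (underlyingCocone s) j))⟩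
  fac s j := HHom.ext' (funext (types_congr_hom (hc.fac (underlyingCocone s) j)))
  uniq s m hm := HHom.ext' (funext (types_congr_hom
    (hc.uniq (underlyingCocone s) (TypeCat.ofHom m.toFun) fun j =>
      ConcreteCategory.hom_ext _ _ fun y => congrFun (congrArg HHom.toFun (hm j)) y)))

lemma preservesFiniteColimits_nabla : PreservesFiniteColimits Nabla :=
  ⟨fun _ _ _ => ⟨⟨fun hc => ⟨nablaIsColimit hc⟩⟩⟩⟩

def globalPoint {Z : HAsmObj} (z : Z.carrier) : Nabla.obj PUnit ⟶ Z :=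
  ⟨fun _ => z, (exists_tracks_nablaObj_iff _).mpr <|
    let ⟨v, hv⟩ := Z.rz_ne z
    ⟨v, Z.rz_sub z hv, fun _ => hv⟩⟩

section BinaryFan

variable {Z B : HAsmObj} {Q : BinaryFan Z B} (hQ : IsLimit Q)

lemma lift_fst_toFun {W : HAsmObj} (f : W ⟶ Z) (g : W ⟶ B) (w : W.carrier) :
    Q.fst.toFun ((hQ.lift (BinaryFan.mk f g)).toFun w) = f.toFun w :=
  congrFun (congrArg HHom.toFun (hQ.fac (BinaryFan.mk f g) ⟨WalkingPair.left⟩)) w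

lemma lift_snd_toFun {W : HAsmObj} (f : W ⟶ Z) (g : W ⟶ B) (w : W.carrier) :
    Q.snd.toFun ((hQ.lift (BinaryFan.mk f g)).toFun w) = g.toFun w :=
  congrFun (congrArg HHom.toFun (hQ.fac (BinaryFan.mk f g) ⟨WalkingPair.right⟩)) w

def carrierEquivOfIsLimit : Q.pt.carrier ≃ Z.carrier × B.carrier where
  toFun q := (Q.fst.toFun q, Q.snd.toFun q)
  invFun p := (hQ.lift (BinaryFan.mk (globalPoint p.1) (globalPoint p.2))).toFun PUnit.unit
  left_inv q := by
    have : hQ.lift (BinaryFan.mk (globalPoint (Q.fst.toFun q)) (globalPoint (Q.snd.toFun q))) =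
        globalPoint q := by
      refine hQ.hom_ext fun ⟨j⟩ => ?_
      cases j
      · exact HHom.ext' (funext fun _ => lift_fst_toFun hQ _ _ _)
      · exact HHom.ext' (funext fun _ => lift_snd_toFun hQ _ _ _)
    exact congrFun (congrArg HHom.toFun this) PUnit.unit
  right_inv p := Prod.ext (lift_fst_toFun hQ _ _ _) (lift_snd_toFun hQ _ _ _)

end BinaryFan

lemma existsUnique_curry_nabla {X Y : Type} {P : BinaryFan (Nabla.obj (X → Y)) (Nabla.obj X)}
    (hP : IsLimit P) {Z : HAsmObj} {Q : BinaryFan Z (Nabla.obj X)} (hQ : IsLimit Q)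
    (u : Q.pt ⟶ Nabla.obj Y) :
    ∃! t : Z ⟶ Nabla.obj (X → Y), hP.lift (BinaryFan.mk (Q.fst ≫ t) Q.snd) ≫
      toNabla (fun p => P.fst.toFun p (P.snd.toFun p)) = u := by
  let curryEquiv : (Z ⟶ Nabla.obj (X → Y)) ≃ (Q.pt ⟶ Nabla.obj Y) :=
    (homNablaEquiv Z (X → Y)).trans <| (Equiv.curry _ _ _).symm.trans <|
      ((carrierEquivOfIsLimit hQ).symm.arrowCongr (Equiv.refl Y)).trans
        (homNablaEquiv Q.pt Y).symm
  have h_curry : ∀ t, hP.lift (BinaryFan.mk (Q.fst ≫ t) Q.snd) ≫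
      toNabla (fun p => P.fst.toFun p (P.snd.toFun p)) = curryEquiv t := fun t =>
    HHom.ext' <| funext fun q =>
      congrArg₂ (fun (f : X → Y) (x : X) => f x)
        (lift_fst_toFun hP _ _ q) (lift_snd_toFun hP _ _ q)
  obtain ⟨t, ht, ht_unique⟩ := curryEquiv.bijective.existsUnique u
  exact ⟨t, (h_curry t).trans ht, fun t' ht' => ht_unique t' ((h_curry t').symm.trans ht')⟩

open CategoryTheory.Limits in
/-- `∇` is full and faithful, preserves finite limits and finite colimits,
and preserves exponentials: `∇(Y^X)` is an exponential of `∇Y` by `∇X` in `HAsm`. -/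
theorem nabla_full_faithful_preserves :
    Nabla.Full ∧ Nabla.Faithful ∧
    Nonempty (PreservesFiniteLimits Nabla) ∧
    Nonempty (PreservesFiniteColimits Nabla) ∧
    ∀ (X Y : Type) (P : BinaryFan (Nabla.obj (X → Y)) (Nabla.obj X)) (hP : IsLimit P),
      ∃ ev : P.pt ⟶ Nabla.obj Y,
        ∀ (Z : HAsmObj) (Q : BinaryFan Z (Nabla.obj X)) (_ : IsLimit Q)
          (u : Q.pt ⟶ Nabla.obj Y),
          ∃! t : Z ⟶ Nabla.obj (X → Y),
            hP.lift (BinaryFan.mk (Q.fst ≫ t) Q.snd) ≫ ev = u := by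
  have := gammaNablaAdjunction.rightAdjoint_preservesLimits
  exact ⟨nablaFullyFaithful.full, nablaFullyFaithful.faithful, ⟨inferInstance⟩,
    ⟨preservesFiniteColimits_nabla⟩,
    fun X Y P hP => ⟨_, fun Z Q hQ u => existsUnique_curry_nabla hP hQ u⟩⟩

end Herbrand
end

section
/- Let T be a decidable set of finite sequences of natural numbers that contains the empty sequence and is closed under taking prefixes, and suppose there is a computable function b : List ℕ → ℕ such that for all l ∈ T and all x ∈ ℕ, if l ++ [x] ∈ T then x ≤ b l. Then there is a computable function h : ℕ → ℕ such that every infinite path α through T satisfies α n ≤ h n for all n ∈ ℕ. -/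
/-!
Build greedily a branch `s` whose `n`-th entry is the maximum of `b` over all lists whose code
is at most the code of `s ↾ n`. Coding lists of naturals is monotone for the componentwise order,
so by induction every infinite path of `T` is dominated componentwise by `s`, and `s` is computable.
-/

open Encodable Denumerable List

theorem Nat.pair_le_pair {a₁ a₂ b₁ b₂ : ℕ} (ha : a₁ ≤ a₂) (hb : b₁ ≤ b₂) :
    Nat.pair a₁ b₁ ≤ Nat.pair a₂ b₂ :=
  have hleft : StrictMono (Nat.pair · b₁) := fun _ _ => Nat.pair_lt_pair_left b₁
  have hright : StrictMono (Nat.pair a₂) := fun _ _ => Nat.pair_lt_pair_right a₂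
  (hleft.monotone ha).trans (hright.monotone hb)

theorem encode_le_encode_of_forall₂_le :
    ∀ {l l' : List ℕ}, Forall₂ (· ≤ ·) l l' → encode l ≤ encode l'
  | _, _, .nil => le_rfl
  | _, _, .cons ha hl => Nat.succ_le_succ (Nat.pair_le_pair ha (encode_le_encode_of_forall₂_le hl))

theorem Computable.partialSups {f : ℕ → ℕ} (hf : Computable f) :
    Computable fun k => partialSups f k := by
  have hstep : Computable₂ fun (_ : ℕ) (p : ℕ × ℕ) => max p.2 (f (p.1 + 1)) :=
    (Primrec.nat_max.to_comp.comp (Computable.snd.comp Computable.snd)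
      (hf.comp (Computable.succ.comp (Computable.fst.comp Computable.snd)))).to₂
  refine (Computable.nat_rec Computable.id (hf.comp (Computable.const 0)) hstep).of_eq fun k => ?_
  induction k with
  | zero => simp
  | succ k ih => simp_all

section BoundingBranch

variable (b : List ℕ → ℕ)

def supUpToCode (l : List ℕ) : ℕ :=
  partialSups (b ∘ ofNat (List ℕ)) (encode l)

def boundingBranch : ℕ → List ℕ
  | 0 => []
  | n + 1 => boundingBranch n ++ [supUpToCode b (boundingBranch n)]

variable {b}

theorem le_supUpToCode {l l' : List ℕ} (h : Forall₂ (· ≤ ·) l' l) : b l' ≤ supUpToCode b l := by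
  simpa [supUpToCode] using
    le_partialSups_of_le (b ∘ ofNat (List ℕ)) (encode_le_encode_of_forall₂_le h)

theorem computable_supUpToCode (hb : Computable b) : Computable (supUpToCode b) :=
  (hb.comp (Computable.ofNat (List ℕ))).partialSups.comp Computable.encode

theorem computable_boundingBranch (hb : Computable b) : Computable (boundingBranch b) := by
  have hstep : Computable₂ fun (_ : ℕ) (p : ℕ × List ℕ) => p.2 ++ [supUpToCode b p.2] :=
    (Computable.list_concat.comp (Computable.snd.comp Computable.snd)
      ((computable_supUpToCode hb).comp (Computable.snd.comp Computable.snd))).to₂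
  refine (Computable.nat_rec Computable.id (Computable.const []) hstep).of_eq fun n => ?_
  induction n with
  | zero => rfl
  | succ n ih => simp_all [boundingBranch]

theorem forall₂_le_boundingBranch {α : ℕ → ℕ} (hα : ∀ n, α n ≤ b ((range n).map α)) (n : ℕ) :
    Forall₂ (· ≤ ·) ((range n).map α) (boundingBranch b n) := by
  induction n with
  | zero => exact .nil
  | succ n ih =>
    rw [range_succ, map_append, map_singleton, boundingBranch]
    exact rel_append ih (.cons ((hα n).trans (le_supUpToCode ih)) .nil)

end BoundingBranch

theorem computable_bound_of_computably_bounded_tree_general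
    (T : Set (List ℕ))
    (b : List ℕ → ℕ) (hb : Computable b)
    (hbd : ∀ l ∈ T, ∀ x : ℕ, l ++ [x] ∈ T → x ≤ b l) :
    ∃ h : ℕ → ℕ, Computable h ∧
      ∀ α : ℕ → ℕ, (∀ n : ℕ, (List.range n).map α ∈ T) → ∀ n : ℕ, α n ≤ h n := by
  refine ⟨fun n => supUpToCode b (boundingBranch b n),
    (computable_supUpToCode hb).comp (computable_boundingBranch hb), fun α hα => ?_⟩
  have hα_bounded : ∀ n, α n ≤ b ((range n).map α) := fun n =>
    hbd _ (hα n) _ (by simpa [range_succ] using hα (n + 1))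
  exact fun n => (hα_bounded n).trans (le_supUpToCode (forall₂_le_boundingBranch hα_bounded n))

/-- if `T` is a decidable tree (containing the empty sequence and closed
under prefixes) whose branching is bounded by a computable function `b`, then there is a
computable function `h` bounding every infinite path of `T` pointwise. -/
theorem computable_bound_of_computably_bounded_tree
    (T : Set (List ℕ)) (hdec : ComputablePred (· ∈ T))
    (hroot : [] ∈ T) (hpre : ∀ l ∈ T, ∀ l' : List ℕ, l' <+: l → l' ∈ T)
    (b : List ℕ → ℕ) (hb : Computable b)
    (hbd : ∀ l ∈ T, ∀ x : ℕ, l ++ [x] ∈ T → x ≤ b l) :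
    ∃ h : ℕ → ℕ, Computable h ∧
      ∀ α : ℕ → ℕ, (∀ n : ℕ, (List.range n).map α ∈ T) → ∀ n : ℕ, α n ≤ h n :=
  computable_bound_of_computably_bounded_tree_general T b hb hbd
end
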